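/- The classical period of a Laurent polynomial in two variables is invariant under algebraic mutation: let φ = φ_{v,F} be an algebraic mutation and let f, g be Laurent polynomials with g = φ*f. Then const(f^d) = const(g^d) for every d ≥ 0, i.e. π_f(t) = π_g(t). -/

import Mathlib

noncomputable section
open Pointwise

abbrev M : Type := ℤ × ℤ
abbrev NN : Type := ℤ × ℤ

def toR (m : M) : ℝ × ℝ := ((m.1 : ℝ), (m.2 : ℝ))
def pairZ (u : NN) (m : M) : ℤ := u.1 * m.1 + u.2 * m.2
def pairR (u : NN) (x : ℝ × ℝ) : ℝ := u.1 * x.1 + u.2 * x.2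
def IsPrimitive (u : ℤ × ℤ) : Prop := Int.gcd u.1 u.2 = 1

/-- A full-dimensional convex lattice polygon in `ℝ²`. -/
def IsLatticePolygon (P : Set (ℝ × ℝ)) : Prop :=
  (∃ S : Finset M, P = convexHull ℝ (toR '' (S : Set M))) ∧ (interior P).Nonempty

/-- A Fano polygon: the origin is in the strict interior and all vertices are primitive. -/
def IsFanoPolygon (P : Set (ℝ × ℝ)) : Prop :=
  IsLatticePolygon P ∧ (0 : ℝ × ℝ) ∈ interior P ∧
  ∀ x ∈ Set.extremePoints ℝ P, ∃ m : M, toR m = x ∧ IsPrimitive m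

/-- The face of `P` cut out by the inward normal `u` at height `h`. -/
def edgeSet (P : Set (ℝ × ℝ)) (u : NN) (h : ℤ) : Set (ℝ × ℝ) :=
  {x ∈ P | pairR u x = -(h : ℝ)}

/-- `(u,h)` is the data of an edge of `P`: `u` a primitive inward normal, `h = h_E` the
lattice height, and the corresponding face is one-dimensional (not a single point). -/
def IsEdge (P : Set (ℝ × ℝ)) (u : NN) (h : ℤ) : Prop :=
  IsPrimitive u ∧ 0 < h ∧ (∀ x ∈ P, -(h : ℝ) ≤ pairR u x) ∧ ¬ (edgeSet P u h).Subsingleton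

def latticePts (E : Set (ℝ × ℝ)) : Set M := {m : M | toR m ∈ E}

/-- Lattice length of the edge of `P` with data `(u,h)`: number of lattice points minus one. -/
def latLen (P : Set (ℝ × ℝ)) (u : NN) (h : ℤ) : ℕ := (latticePts (edgeSet P u h)).ncard - 1

/-- A T-polygon: a Fano polygon such that `h_E ∣ ℓ_E` for every edge `E`. -/
def IsTPolygon (P : Set (ℝ × ℝ)) : Prop :=
  IsFanoPolygon P ∧ ∀ u h, IsEdge P u h → h.toNat ∣ latLen P u h

/-- The slice of `P` at height `h` with respect to `v`. -/
def sliceAt (P : Set (ℝ × ℝ)) (v : NN) (h : ℤ) : Set (ℝ × ℝ) := {x ∈ P | pairR v x = (h : ℝ)}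

def IsPolytope (Q : Set (ℝ × ℝ)) : Prop :=
  ∃ S : Finset (ℝ × ℝ), Q = convexHull ℝ (S : Set (ℝ × ℝ))

/-- Mutation data: `v` primitive in the dual lattice, `F` a lattice segment or point in `v^⊥`. -/
def IsMutationData (v : NN) (F : Set (ℝ × ℝ)) : Prop :=
  IsPrimitive v ∧ ∃ a b : M, pairZ v a = 0 ∧ pairZ v b = 0 ∧ F = segment ℝ (toR a) (toR b)

/-- `P` is mutable with respect to `(v,F)` (via the witnesses `G h`), and
`P' = mut_{v,F}(P)` is the corresponding mutation. -/
def IsMutationOf (v : NN) (F : Set (ℝ × ℝ)) (P P' : Set (ℝ × ℝ)) : Prop :=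
  IsMutationData v F ∧
  ∃ G : ℤ → Set (ℝ × ℝ),
    (∀ h : ℤ, h < 0 → IsPolytope (G h) ∧ sliceAt P v h = G h + ((-h : ℤ) : ℝ) • F) ∧
    P' = convexHull ℝ ((⋃ h : ℤ, ⋃ _ : h < 0, G h) ∪
      (⋃ h : ℤ, ⋃ _ : 0 ≤ h, (sliceAt P v h + (h : ℝ) • F)))

def IsPolyMutation (P P' : Set (ℝ × ℝ)) : Prop := ∃ v F, IsMutationOf v F P P'

def unimodMap (a b c d : ℤ) (x : ℝ × ℝ) : ℝ × ℝ :=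
  ((a : ℝ) * x.1 + (b : ℝ) * x.2, (c : ℝ) * x.1 + (d : ℝ) * x.2)

/-- `P'` is the image of `P` under a transformation in `GL₂(ℤ)`. -/
def IsUnimodularImage (P P' : Set (ℝ × ℝ)) : Prop :=
  ∃ a b c d : ℤ, (a * d - b * c = 1 ∨ a * d - b * c = -1) ∧ P' = unimodMap a b c d '' P

/-- Laurent polynomials in two variables. -/
abbrev LP := AddMonoidAlgebra ℂ M

instance : IsDomain LP := NoZeroDivisors.to_isDomain _

/-- The field of fractions `ℂ(x,y)`. -/
abbrev K := FractionRing LP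

def ι : LP →+* K := algebraMap LP K

/-- The monomial `x^m`. -/
def mono (m : M) : LP := AddMonoidAlgebra.single m 1

/-- The coefficient of the constant monomial. -/
def constTerm (f : LP) : ℂ := f.coeff 0

/-- The Newton polygon of a Laurent polynomial. -/
def Newt (f : LP) : Set (ℝ × ℝ) := convexHull ℝ (toR '' (f.coeff.support : Set M))

/-- `φ` is the algebraic mutation `φ_{v,F}` of the field of fractions: the (ℂ-linear) field
automorphism determined by `x^m ↦ x^m F^{⟨m,v⟩}`, where `v` is primitive and all monomials
of the factor `F` lie in `v^⊥`. -/
def IsAlgMutation (v : NN) (F : LP) (φ : K ≃+* K) : Prop :=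
  IsPrimitive v ∧ F ≠ 0 ∧ (∀ m ∈ F.coeff.support, pairZ v m = 0) ∧
  (∀ c : ℂ, φ (ι (AddMonoidAlgebra.single 0 c)) = ι (AddMonoidAlgebra.single 0 c)) ∧
  (∀ m : M, φ (ι (mono m)) = ι (mono m) * (ι F) ^ (pairZ v m))

/-- One mutation step between Laurent polynomials: `g = φ*f` is again a Laurent polynomial. -/
def MutStep (f g : LP) : Prop :=
  ∃ (v : NN) (F : LP) (φ : K ≃+* K), IsAlgMutation v F φ ∧ φ (ι f) = ι g

/-- Mutation equivalence: a finite chain of algebraic mutations all of whose intermediate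
pullbacks are Laurent polynomials. -/
def MutEquiv : LP → LP → Prop := Relation.ReflTransGen MutStep

/-!
Grade `ℂ[M]` by the height `⟨m, v⟩` of monomials. The mutation multiplies a homogeneous
element of height `n` by `F ^ n`, and `F` has height `0`. Clearing denominators with a power
`F ^ N` turns `φ p = q` into the identity `q F^N = ∑ₙ pₙ F^(n+N)` of Laurent polynomials; its
height-`0` part reads `q₀ F^N = p₀ F^N`, so `q₀ = p₀`, and the constant term only depends on the
height-`0` part.
-/

namespace AddMonoidAlgebra

open DirectSum

theorem coeff_decompose_gradeBy_of_map_eq {R M ι : Type*} [CommSemiring R] [AddMonoid M]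
    [AddMonoid ι] [DecidableEq ι] (f : M →+ ι) (a : R[M]) {m : M} {i : ι} (h : f m = i) :
    (decompose (gradeBy R f) a i : R[M]).coeff m = a.coeff m := by
  induction a using AddMonoidAlgebra.induction_linear with
  | zero => simp
  | add a b ha hb => simp [decompose_add, ha, hb]
  | single m' r =>
    by_cases hm' : f m' = i
    · rw [decompose_of_mem_same _ (hm' ▸ single_mem_gradeBy f m' r)]
    · have hne : m ≠ m' := fun he => hm' (he ▸ h)
      rw [decompose_of_mem_ne _ (single_mem_gradeBy f m' r) hm', coeff_zero, coeff_single,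
        Finsupp.single_eq_of_ne hne, Finsupp.coe_zero, Pi.zero_apply]

end AddMonoidAlgebra

namespace DirectSum

theorem coe_decompose_zero_sum_mul_pow {ι σ A : Type*} [DecidableEq ι] [AddMonoid ι] [Semiring A]
    [SetLike σ A] [AddSubmonoidClass σ A] (𝒜 : ι → σ) [GradedRing 𝒜]
    [∀ (i) (x : 𝒜 i), Decidable (x ≠ 0)] (p : A) {F : A} (hF : F ∈ 𝒜 0) (k : ι → ℕ) :
    (decompose 𝒜 (∑ n ∈ (decompose 𝒜 p).support, (decompose 𝒜 p n : A) * F ^ k n) 0 : A) =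
      decompose 𝒜 p 0 * F ^ k 0 := by
  have hFk (j : ℕ) : F ^ j ∈ 𝒜 0 := (SetLike.GradeZero.submonoid 𝒜).pow_mem hF j
  rw [decompose_sum (ℳ := 𝒜), DFinsupp.finsetSum_apply, AddSubmonoidClass.coe_finsetSum]
  simp_rw [coe_decompose_mul_of_right_mem_zero 𝒜 (hFk _)]
  rw [Finset.sum_eq_single (0 : ι)]
  · rw [decompose_coe, of_eq_same]
  · intro n _ hn
    rw [decompose_of_mem_ne 𝒜 (SetLike.coe_mem _) hn, zero_mul]
  · intro h0
    rw [DFinsupp.notMem_support_iff.mp h0, ZeroMemClass.coe_zero, decompose_zero, zero_apply,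
      ZeroMemClass.coe_zero, zero_mul]

end DirectSum

open AddMonoidAlgebra DirectSum

def pairZHom (v : NN) : M →+ ℤ where
  toFun := pairZ v
  map_zero' := by simp [pairZ]
  map_add' a b := by simp only [pairZ, Prod.fst_add, Prod.snd_add]; ring

abbrev heightGrading (v : NN) : ℤ → Submodule ℂ LP := gradeBy ℂ (pairZHom v)

theorem constTerm_decompose_heightGrading_zero (v : NN) (p : LP) :
    constTerm (decompose (heightGrading v) p 0) = constTerm p :=
  coeff_decompose_gradeBy_of_map_eq _ p (map_zero _)

theorem ι_injective : Function.Injective ι :=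
  IsFractionRing.injective LP K

namespace IsAlgMutation

variable {v : NN} {F : LP} {φ : K ≃+* K}

theorem mem_heightGrading_zero (hφ : IsAlgMutation v F φ) : F ∈ heightGrading v 0 :=
  hφ.2.2.1

theorem ne_zero (hφ : IsAlgMutation v F φ) : F ≠ 0 :=
  hφ.2.1

theorem ι_ne_zero (hφ : IsAlgMutation v F φ) : ι F ≠ 0 :=
  (map_ne_zero_iff ι ι_injective).mpr hφ.ne_zero

theorem map_single (hφ : IsAlgMutation v F φ) (m : M) (c : ℂ) :
    φ (ι (single m c)) = ι (single m c) * ι F ^ pairZ v m := by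
  have hsplit : single m c = single 0 c * mono m := by
    rw [mono, single_mul_single, zero_add, mul_one]
  obtain ⟨-, -, -, hconst, hmono⟩ := hφ
  rw [hsplit, map_mul, map_mul, hconst, hmono, mul_assoc]

theorem map_of_mem_heightGrading (hφ : IsAlgMutation v F φ) {n : ℤ} {a : LP}
    (ha : a ∈ heightGrading v n) : φ (ι a) = ι a * ι F ^ n := by
  have hheight (m) (hm : m ∈ a.coeff.support) : pairZ v m = n := ha m hm
  conv_lhs => rw [← sum_coeff_single a, Finsupp.sum]
  rw [map_sum, map_sum, Finset.sum_congr rfl fun m hm => by rw [hφ.map_single, hheight m hm],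
    ← Finset.sum_mul, ← map_sum, ← Finsupp.sum, sum_coeff_single]

open Classical in
theorem map_mul_pow_eq_sum (hφ : IsAlgMutation v F φ) (p : LP) (N : ℕ)
    (hN : ∀ n ∈ (decompose (heightGrading v) p).support, -(N : ℤ) ≤ n) :
    φ (ι p) * ι F ^ N = ι (∑ n ∈ (decompose (heightGrading v) p).support,
      (decompose (heightGrading v) p n : LP) * F ^ (n + N).toNat) := by
  conv_lhs => rw [← sum_support_decompose (heightGrading v) p]
  rw [map_sum, map_sum, Finset.sum_mul, map_sum]
  refine Finset.sum_congr rfl fun n hn => ?_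
  rw [hφ.map_of_mem_heightGrading (SetLike.coe_mem _), map_mul, map_pow, mul_assoc,
    ← zpow_natCast, ← zpow_add₀ hφ.ι_ne_zero, ← zpow_natCast,
    Int.toNat_of_nonneg (by linarith [hN n hn])]

theorem decompose_zero_eq (hφ : IsAlgMutation v F φ) {p q : LP} (hpq : φ (ι p) = ι q) :
    (decompose (heightGrading v) p 0 : LP) = decompose (heightGrading v) q 0 := by
  classical
  obtain ⟨b, hb⟩ := (decompose (heightGrading v) p).support.bddBelow
  set N := (-b).toNat
  have hN : ∀ n ∈ (decompose (heightGrading v) p).support, -(N : ℤ) ≤ n := fun n hn => by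
    have := hb hn
    omega
  have hFN : F ^ N ∈ heightGrading v 0 :=
    (SetLike.GradeZero.submonoid (heightGrading v)).pow_mem hφ.mem_heightGrading_zero N
  have hcleared : q * F ^ N = ∑ n ∈ (decompose (heightGrading v) p).support,
      (decompose (heightGrading v) p n : LP) * F ^ (n + N).toNat :=
    ι_injective (by rw [map_mul, map_pow, ← hpq, hφ.map_mul_pow_eq_sum p N hN])
  have hzero := congrArg (fun x : LP => (decompose (heightGrading v) x 0 : LP)) hcleared
  dsimp only at hzero
  rw [coe_decompose_mul_of_right_mem_zero _ hFN,
    coe_decompose_zero_sum_mul_pow _ p hφ.mem_heightGrading_zero, zero_add, Int.toNat_natCast]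
    at hzero
  exact (mul_right_cancel₀ (pow_ne_zero N hφ.ne_zero) hzero).symm

theorem constTerm_eq (hφ : IsAlgMutation v F φ) {p q : LP} (hpq : φ (ι p) = ι q) :
    constTerm p = constTerm q := by
  rw [← constTerm_decompose_heightGrading_zero v p, hφ.decompose_zero_eq hpq,
    constTerm_decompose_heightGrading_zero]

end IsAlgMutation

/-- The classical period of a Laurent polynomial in two variables is invariant
under algebraic mutation: if `φ = φ_{v,F}` is an algebraic mutation and `g = φ*f` is again a
Laurent polynomial, then `const(f^d) = const(g^d)` for all `d ≥ 0`, i.e. `π_f(t) = π_g(t)`. -/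
theorem classical_period_mutation_invariant (f g F : LP) (v : NN) (φ : K ≃+* K)
    (hφ : IsAlgMutation v F φ)
    (hg : φ (ι f) = ι g) :
    ∀ d : ℕ, constTerm (f ^ d) = constTerm (g ^ d) := by
  intro d
  apply hφ.constTerm_eq
  rw [map_pow, map_pow, hg, map_pow]
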